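/- arXiv:2008.03793 — 2 statements merged into one kernel-verified Lean document; each statement's English description precedes it below -/
import Mathlib

section
/- For the Poincaré operator p² with base point the origin, defined on vector fields on ℝ³ by (p²u)(x) = ∫₀¹ u(tx) × (tx) dt: if each component of u is a polynomial of degree at most r, then each component of p²u is a polynomial of degree at most r+1. -/
open scoped BigOperators
open MeasureTheory

/-- Vectors in ℝ³. -/
abbrev V3 : Type := Fin 3 → ℝ

/-- Partial derivative of a scalar function in direction `i`. -/
noncomputable def pd (f : V3 → ℝ) (i : Fin 3) (x : V3) : ℝ :=
  fderiv ℝ f x (Pi.single i 1)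

/-- Gradient. -/
noncomputable def grad (f : V3 → ℝ) (x : V3) : V3 := fun i => pd f i x

/-- Euclidean dot product. -/
def dot (a b : V3) : ℝ := ∑ i, a i * b i

/-- Cross product in ℝ³. -/
def cross (a b : V3) : V3 :=
  ![a 1 * b 2 - a 2 * b 1, a 2 * b 0 - a 0 * b 2, a 0 * b 1 - a 1 * b 0]

/-- Curl in ℝ³. -/
noncomputable def curl (u : V3 → V3) (x : V3) : V3 :=
  ![pd (fun y => u y 2) 1 x - pd (fun y => u y 1) 2 x,
    pd (fun y => u y 0) 2 x - pd (fun y => u y 2) 0 x,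
    pd (fun y => u y 1) 0 x - pd (fun y => u y 0) 1 x]

/-- Divergence in ℝ³. -/
noncomputable def div3 (u : V3 → V3) (x : V3) : ℝ := ∑ i, pd (fun y => u y i) i x

/-- Poincaré operator `p¹` (1-forms to 0-forms), base point the origin. -/
noncomputable def poin1 (u : V3 → V3) (x : V3) : ℝ :=
  ∫ t in (0:ℝ)..1, dot (u (t • x)) x

/-- Poincaré operator `p²` (2-forms to 1-forms), base point the origin. -/
noncomputable def poin2 (u : V3 → V3) (x : V3) : V3 :=
  ∫ t in (0:ℝ)..1, cross (u (t • x)) (t • x)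

/-- Poincaré operator `p³` (3-forms to 2-forms), base point the origin. -/
noncomputable def poin3 (q : V3 → ℝ) (x : V3) : V3 :=
  ∫ t in (0:ℝ)..1, (t ^ 2 * q (t • x)) • x

/-!
Since `cross (u y) y` is a polynomial field of degree `≤ r + 1`, it suffices that the radial
average `x ↦ ∫₀¹ R (t • x) dt` of a polynomial `R` is a polynomial of no larger degree: a monomial
`c • x^d` scales as `t ^ |d|`, so its average is `c • x^d / (|d| + 1)`.
-/

open MvPolynomial

namespace MvPolynomial

variable {σ : Type*}

noncomputable def radialAverage (P : MvPolynomial σ ℝ) : MvPolynomial σ ℝ :=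
  ∑ d ∈ P.support, monomial d (P.coeff d / (d.degree + 1))

theorem totalDegree_radialAverage_le (P : MvPolynomial σ ℝ) :
    (radialAverage P).totalDegree ≤ P.totalDegree :=
  (totalDegree_finsetSum _ _).trans <| Finset.sup_le fun _ hd =>
    (totalDegree_monomial_le _ _).trans (le_totalDegree hd)

theorem eval_smul_monomial {R : Type*} [CommSemiring R] (t : R) (x : σ → R) (d : σ →₀ ℕ)
    (c : R) : eval (t • x) (monomial d c) = t ^ d.degree * eval x (monomial d c) := by
  simp only [eval_monomial, Finsupp.prod, Pi.smul_apply, smul_eq_mul, mul_pow,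
    Finset.prod_mul_distrib, Finset.prod_pow_eq_pow_sum, Finsupp.degree_apply]
  ring

theorem continuous_eval_smul (P : MvPolynomial σ ℝ) (x : σ → ℝ) :
    Continuous fun t : ℝ => eval (t • x) P :=
  (continuous_eval P).comp (continuous_id.smul continuous_const)

theorem integral_eval_smul_monomial (x : σ → ℝ) (d : σ →₀ ℕ) (c : ℝ) :
    ∫ t in (0 : ℝ)..1, eval (t • x) (monomial d c) = eval x (monomial d c) / (d.degree + 1) := by
  simp only [eval_smul_monomial, intervalIntegral.integral_mul_const, integral_pow]
  norm_num
  ring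

theorem integral_eval_smul (P : MvPolynomial σ ℝ) (x : σ → ℝ) :
    ∫ t in (0 : ℝ)..1, eval (t • x) P = eval x (radialAverage P) := by
  conv_lhs => rw [P.as_sum]
  simp only [map_sum, radialAverage]
  rw [intervalIntegral.integral_finsetSum fun d _ =>
    (continuous_eval_smul _ x).intervalIntegrable _ _]
  refine Finset.sum_congr rfl fun d _ => ?_
  rw [integral_eval_smul_monomial, eval_monomial, eval_monomial]
  ring

end MvPolynomial

theorem intervalIntegral_pi_apply {ι : Type*} [Fintype ι] {f : ℝ → ι → ℝ} {a b : ℝ}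
    (hf : IntervalIntegrable f MeasureTheory.volume a b) (i : ι) :
    (∫ t in a..b, f t) i = ∫ t in a..b, f t i :=
  ((ContinuousLinearMap.proj (R := ℝ) i).intervalIntegral_comp_comm hf).symm

section PolyCross

variable {σ : Type*}

noncomputable def polyCross (A B : Fin 3 → MvPolynomial σ ℝ) : Fin 3 → MvPolynomial σ ℝ :=
  ![A 1 * B 2 - A 2 * B 1, A 2 * B 0 - A 0 * B 2, A 0 * B 1 - A 1 * B 0]

theorem eval_polyCross (A B : Fin 3 → MvPolynomial σ ℝ) (x : σ → ℝ) :
    (fun i => eval x (polyCross A B i)) =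
      cross (fun i => eval x (A i)) (fun i => eval x (B i)) := by
  ext i
  fin_cases i <;> simp [polyCross, cross]

theorem totalDegree_polyCross_le {A B : Fin 3 → MvPolynomial σ ℝ} {a b : ℕ}
    (hA : ∀ i, (A i).totalDegree ≤ a) (hB : ∀ i, (B i).totalDegree ≤ b) (i : Fin 3) :
    (polyCross A B i).totalDegree ≤ a + b := by
  have hmul : ∀ j k, (A j * B k).totalDegree ≤ a + b := fun j k =>
    (totalDegree_mul _ _).trans (add_le_add (hA j) (hB k))
  fin_cases i <;> exact (totalDegree_sub _ _).trans (max_le (hmul _ _) (hmul _ _))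

end PolyCross

/-- p² maps vector fields with polynomial components of degree ≤ r
to vector fields with polynomial components of degree ≤ r+1. -/
theorem poin2_polynomial (r : ℕ) (P : Fin 3 → MvPolynomial (Fin 3) ℝ)
    (hP : ∀ i, (P i).totalDegree ≤ r)
    (u : V3 → V3) (hu : ∀ x i, u x i = MvPolynomial.eval x (P i)) :
    ∃ Q : Fin 3 → MvPolynomial (Fin 3) ℝ,
      (∀ i, (Q i).totalDegree ≤ r + 1) ∧
        ∀ x i, poin2 u x i = MvPolynomial.eval x (Q i) := by
  set R := polyCross P X
  have hR : ∀ y, cross (u y) y = fun i => eval y (R i) := fun y => by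
    rw [eval_polyCross]
    congr 1 <;> ext j <;> simp [hu]
  refine ⟨fun i => radialAverage (R i), fun i => ?_, fun x i => ?_⟩
  · exact (totalDegree_radialAverage_le _).trans
      (totalDegree_polyCross_le hP (fun j => (totalDegree_X j).le) i)
  · have hcont : Continuous fun t : ℝ => fun j => eval (t • x) (R j) :=
      continuous_pi fun j => continuous_eval_smul _ x
    simp only [poin2, hR]
    rw [intervalIntegral_pi_apply (hcont.intervalIntegrable _ _), integral_eval_smul]
end

section
/- Under the affine map F(x̂) = B x̂ + b with B invertible, if u ∘ F = B^{-T} û (covariant Piola transform), then (∇×u) ∘ F = (1/det B) B (∇̂×û), i.e., the curl transforms by the contravariant Piola transform. -/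
/-!
By the chain rule the Jacobian of `u` at `F x̂` is `B⁻ᵀ (Dû x̂) B⁻¹`. The curl of a field is the
axial vector of the skew part of its Jacobian, and for every `3 × 3` matrix `A` the axial vector
of `Aᵀ J A` is `adj A` applied to that of `J`: this is the identity
`(A a) × (A b) = (adj A)ᵀ (a × b)` in matrix form. For `A = B⁻¹` we have `adj A = (det B)⁻¹ B`.
-/

open scoped BigOperators
open MeasureTheory

open Matrix

/-- The axial vector `w` of the skew part of `J`, i.e. `(J - Jᵀ) *ᵥ v = w × v`; when `J` is the
Jacobian matrix of a vector field, `w` is its curl. -/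
def Matrix.axialVector {R : Type*} [CommRing R] (J : Matrix (Fin 3) (Fin 3) R) : Fin 3 → R :=
  ![J 2 1 - J 1 2, J 0 2 - J 2 0, J 1 0 - J 0 1]

theorem Matrix.axialVector_transpose_mul_mul {R : Type*} [CommRing R]
    (A J : Matrix (Fin 3) (Fin 3) R) :
    axialVector (Aᵀ * J * A) = A.adjugate *ᵥ axialVector J := by
  ext i
  fin_cases i <;>
  · simp only [axialVector, adjugate_fin_three, mul_apply, transpose_apply, mulVec, dotProduct,
      Fin.sum_univ_three, Fin.isValue, Fin.zero_eta, Fin.mk_one, Fin.reduceFinMk, of_apply,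
      cons_val_zero, cons_val_one, cons_val, cons_val', cons_val_fin_one]
    ring

theorem Matrix.adjugate_nonsing_inv {K n : Type*} [Field K] [Fintype n] [DecidableEq n]
    (B : Matrix n n K) (hB : IsUnit B.det) : adjugate B⁻¹ = B.det⁻¹ • B :=
  calc adjugate B⁻¹ = adjugate B⁻¹ * B⁻¹ * B := by
        rw [Matrix.mul_assoc, nonsing_inv_mul B hB, Matrix.mul_one]
    _ = B.det⁻¹ • B := by
        rw [adjugate_mul, det_nonsing_inv, Ring.inverse_eq_inv', smul_mul, Matrix.one_mul]

theorem hasFDerivAt_of_comp_affine_eq_mulVec {𝕜 m n : Type*}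
    [NontriviallyNormedField 𝕜] [CompleteSpace 𝕜]
    [Fintype m] [DecidableEq m] [Fintype n] [DecidableEq n]
    {B : Matrix n n 𝕜} (hB : IsUnit B.det) (b : n → 𝕜) (M : Matrix m m 𝕜)
    {u v : (n → 𝕜) → m → 𝕜} (huv : ∀ x, u (B *ᵥ x + b) = M *ᵥ v x)
    {x : n → 𝕜} (hv : DifferentiableAt 𝕜 v x) :
    HasFDerivAt u (LinearMap.toContinuousLinearMap (toLin' M)
      ∘L fderiv 𝕜 v x ∘L LinearMap.toContinuousLinearMap (toLin' B⁻¹)) (B *ᵥ x + b) := by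
  have hu : u = fun y => M *ᵥ v (B⁻¹ *ᵥ (y - b)) := by
    funext y
    rw [← huv, mulVec_mulVec, mul_nonsing_inv B hB, one_mulVec, sub_add_cancel]
  have hx : B⁻¹ *ᵥ (B *ᵥ x + b - b) = x := by
    rw [add_sub_cancel_right, mulVec_mulVec, nonsing_inv_mul B hB, one_mulVec]
  have hinv : HasFDerivAt (fun y => B⁻¹ *ᵥ (y - b))
      (LinearMap.toContinuousLinearMap (toLin' B⁻¹)) (B *ᵥ x + b) :=
    (LinearMap.toContinuousLinearMap (toLin' B⁻¹)).hasFDerivAt.comp _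
      ((hasFDerivAt_id _).sub_const b)
  have hv' : HasFDerivAt v (fderiv 𝕜 v x) (B⁻¹ *ᵥ (B *ᵥ x + b - b)) := by
    rw [hx]
    exact hv.hasFDerivAt
  rw [hu]
  exact (LinearMap.toContinuousLinearMap (toLin' M)).hasFDerivAt.comp _
    (hv'.comp (B *ᵥ x + b) hinv)

theorem HasFDerivAt.pd_apply {u : V3 → V3} {L : V3 →L[ℝ] V3} {x : V3} (h : HasFDerivAt u L x)
    (i j : Fin 3) : pd (fun y => u y i) j x = L (Pi.single j 1) i := by
  rw [pd, fderiv_apply h.differentiableAt, h.fderiv]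
  rfl

theorem HasFDerivAt.curl_eq_axialVector {u : V3 → V3} {L : V3 →L[ℝ] V3} {x : V3}
    (h : HasFDerivAt u L x) : curl u x = axialVector (LinearMap.toMatrix' (L : V3 →ₗ[ℝ] V3)) := by
  simp only [curl, axialVector, h.pd_apply, LinearMap.toMatrix'_apply, ContinuousLinearMap.coe_coe]

/-- under the affine map F(x̂) = Bx̂ + b with the covariant Piola
transform u ∘ F = B⁻ᵀ û, the curl transforms contravariantly:
(∇×u) ∘ F = (1/det B) B (∇̂×û). -/
theorem curl_piola_transform (B : Matrix (Fin 3) (Fin 3) ℝ) (hB : IsUnit B.det)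
    (b : V3) (F : V3 → V3) (hF : ∀ xh, F xh = B.mulVec xh + b)
    (uh : V3 → V3) (huh : ContDiff ℝ 1 uh)
    (u : V3 → V3) (hu : ∀ xh, u (F xh) = (B.transpose)⁻¹.mulVec (uh xh)) :
    ∀ xh, curl u (F xh) = (B.det)⁻¹ • B.mulVec (curl uh xh) := by
  intro xh
  have huh_diff : DifferentiableAt ℝ uh xh := huh.differentiable one_ne_zero xh
  have hu_deriv := hasFDerivAt_of_comp_affine_eq_mulVec hB b (Bᵀ)⁻¹
    (fun x => hF x ▸ hu x) huh_diff
  rw [hF, hu_deriv.curl_eq_axialVector, huh_diff.hasFDerivAt.curl_eq_axialVector]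
  simp only [ContinuousLinearMap.toLinearMap_comp, LinearMap.coe_toContinuousLinearMap,
    LinearMap.toMatrix'_comp, LinearMap.toMatrix'_toLin']
  rw [← Matrix.mul_assoc, ← transpose_nonsing_inv, axialVector_transpose_mul_mul,
    adjugate_nonsing_inv B hB, smul_mulVec]
end
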